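/- Suppose the family Υ_n is admissible relative to the sets Ω(n,m) for G ↷ (X,ν). Then for each m, every weak-* limit point ζ_m of the sequence (ζ_{n,m})_n as n → ∞ satisfies ζ_m(ℝ) ≥ 1 − D(m), ζ_m is supported in {t ∈ ℝ : 1/C(m) ≤ |t| ≤ C(m)}, and in particular the support of ζ_m is nonempty and bounded away from 0. -/

import Mathlib

open MeasureTheory Filter Metric Set
open scoped ENNReal

namespace StableRatio

variable {G : Type*} [Group G] [Countable G]

/-- The Radon–Nikodym derivative `d(ν∘g)/dν`, where `(ν∘g)(A) = ν(gA)`,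
so that `ν∘g` is the pushforward of `ν` under the action of `g⁻¹`. -/
noncomputable def RN {Z : Type*} [MeasurableSpace Z] (act : G → Z → Z) (ν : Measure Z)
    (g : G) (z : Z) : ℝ :=
  ((ν.map (act g⁻¹)).rnDeriv ν z).toReal

/-- `R(g,η) = log (d(ν∘g)/dν)(η)`. -/
noncomputable def Rlog {Z : Type*} [MeasurableSpace Z] (act : G → Z → Z) (ν : Measure Z)
    (g : G) (z : Z) : ℝ :=
  Real.log (RN act ν g z)

/-- A family of functions `Υ n : G → Z → Z → ℝ` is admissible relative to a family of
closed subsets `Ω n m ⊆ Z`, with constants `D C : ℕ → ℝ`, `N : ℕ → ℕ` and moduli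
`fbd : ℕ → ℕ → ℝ`.  Here `dZ` is the metric on `Z` and `act` the (quasi-invariant)
action of `G` on `(Z,ν)`. -/
structure IsRelAdmissible {Z : Type*} [MeasurableSpace Z] [TopologicalSpace Z]
    (act : G → Z → Z) (dZ : Z → Z → ℝ) (ν : Measure Z) [SFinite ν]
    (Υ : ℕ → G → Z → Z → ℝ) (Ω : ℕ → ℕ → Set Z)
    (D C : ℕ → ℝ) (N : ℕ → ℕ) (fbd : ℕ → ℕ → ℝ) : Prop where
  meas_Υ : ∀ (n : ℕ) (g : G), Measurable (Function.uncurry (Υ n g))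
  nonneg_Υ : ∀ (n : ℕ) (g : G) (b b' : Z), 0 ≤ Υ n g b b'
  closed_Ω : ∀ n m : ℕ, IsClosed (Ω n m)
  D_pos : ∀ m : ℕ, 0 < D m
  D_lim : Tendsto D atTop (nhds 0)
  Ω_big : ∀ n m : ℕ, ENNReal.ofReal (1 - D m) < ν (Ω n m)
  f_lim : ∀ m : ℕ, Tendsto (fbd m) atTop (nhds 0)
  close : ∀ (n m : ℕ) (g : G) (b b' : Z), b ∈ Ω n m → 0 < Υ n g b b' →
    dZ b b' < fbd m n ∧ dZ (act g⁻¹ b) (act g⁻¹ b') < fbd m n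
  C_pos : ∀ m : ℕ, 0 < C m
  N_pos : ∀ m : ℕ, 0 < N m
  R_bound : ∀ (m n : ℕ), N m < n → ∀ g : G, ∀ᵐ p ∂(ν.prod ν),
    p.1 ∈ Ω n m → 0 < Υ n g p.1 p.2 →
      (|Rlog act ν g⁻¹ p.1| + |Rlog act ν g⁻¹ p.2| < C m ∧
        1 / C m ≤ |Rlog act ν g⁻¹ p.1 - Rlog act ν g⁻¹ p.2|)
  normalized : ∀ (n : ℕ) (b : Z),
    (∑' g : G, ∫⁻ b', ENNReal.ofReal (Υ n g b b') ∂ν) = 1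
  bdd₁ : ∀ (m n : ℕ), N m < n → ∀ᵐ b' ∂ν,
    (∫⁻ b in Ω n m, ∑' g : G, ENNReal.ofReal (Υ n g b b') ∂ν) ≤ ENNReal.ofReal (C m)
  bdd₂ : ∀ (m n : ℕ), N m < n → ∀ᵐ b' ∂ν,
    (∫⁻ b in Ω n m, ∑' g : G, ENNReal.ofReal (Υ n g b (act g b') * RN act ν g b') ∂ν)
      ≤ ENNReal.ofReal (C m)
  bdd₃ : ∀ (m n : ℕ), N m < n → ∀ᵐ b ∂ν,
    (∫⁻ b', ∑' g : G, Set.indicator (Ω n m) (fun _ => (1 : ℝ≥0∞)) (act g b)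
        * ENNReal.ofReal (Υ n g (act g b) b' * RN act ν g b') ∂ν) ≤ ENNReal.ofReal (C m)

/-- The measure `θ` on `ℝ` with `dθ = (1/2) e^{-|t|} dt`. -/
noncomputable def theta : Measure ℝ :=
  MeasureTheory.volume.withDensity (fun t : ℝ => ENNReal.ofReal ((1 / 2) * Real.exp (-|t|)))

instance : SFinite theta := by unfold theta; infer_instance

/-- The measure `ζ_{n,m}` on `ℝ`:
`ζ_{n,m}(E) = Σ_{g∈G} ∫∫ 1_E(R(g⁻¹,b') − R(g⁻¹,b)) 1_{Ω(n,m)}(b) Υ_n(g,b,b') dν(b) dν(b')`. -/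
noncomputable def zeta {Z : Type*} [MeasurableSpace Z] (act : G → Z → Z) (ν : Measure Z)
    [SFinite ν] (Υ : ℕ → G → Z → Z → ℝ) (Ω : ℕ → ℕ → Set Z) (n m : ℕ) : Measure ℝ :=
  Measure.sum fun g : G =>
    ((ν.prod ν).withDensity fun p =>
        Set.indicator (Ω n m) (fun _ => (1 : ℝ≥0∞)) p.1 * ENNReal.ofReal (Υ n g p.1 p.2)).map
      fun p => Rlog act ν g⁻¹ p.2 - Rlog act ν g⁻¹ p.1

/-- The measure `ζ_{n,b}` on `ℝ`:
`ζ_{n,b}(E) = Σ_{g∈G} ∫ 1_E(R(g⁻¹,b') − R(g⁻¹,b)) Υ_n(g,b,b') dν(b')`. -/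
noncomputable def zetaB {Z : Type*} [MeasurableSpace Z] (act : G → Z → Z) (ν : Measure Z)
    (Υ : ℕ → G → Z → Z → ℝ) (n : ℕ) (b : Z) : Measure ℝ :=
  Measure.sum fun g : G =>
    (ν.withDensity fun b' => ENNReal.ofReal (Υ n g b b')).map
      fun b' => Rlog act ν g⁻¹ b' - Rlog act ν g⁻¹ b

/-- `μ` is a weak-* limit point of the sequence `μs`, i.e. the limit of some subsequence
in the weak-* topology (integration against bounded continuous functions). -/
def WeakStarLimitPoint (μs : ℕ → Measure ℝ) (μ : Measure ℝ) : Prop :=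
  ∃ φ : ℕ → ℕ, StrictMono φ ∧
    ∀ f : BoundedContinuousFunction ℝ ℝ,
      Tendsto (fun k => ∫ x, f x ∂(μs (φ k))) atTop (nhds (∫ x, f x ∂μ))

/-- `T` belongs to the (topological) support of the measure `μ` on `ℝ`. -/
def MemSupport (μ : Measure ℝ) (T : ℝ) : Prop :=
  ∀ ε : ℝ, 0 < ε → 0 < μ (Metric.ball T ε)

/-- `r` belongs to the ratio set of the action `act` of `G` on `(Z,μ)`. -/
def InRatioSet {Z : Type*} [MeasurableSpace Z] (act : G → Z → Z) (μ : Measure Z)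
    (r : ℝ) : Prop :=
  ∀ A : Set Z, MeasurableSet A → 0 < μ A → ∀ ε : ℝ, 0 < ε →
    ∃ A' : Set Z, MeasurableSet A' ∧ A' ⊆ A ∧ 0 < μ A' ∧
      ∃ g : G, g ≠ 1 ∧ act g '' A' ⊆ A ∧ ∀ b ∈ A', |RN act μ g b - r| ≤ ε

/-- `r` belongs to the stable ratio set of the action `act` of `G` on `(Z,ν)`:
`r` is in the ratio set of the product of the action with every probability
measure preserving action of `G`. -/
def InStableRatioSet {Z : Type*} [MeasurableSpace Z] (act : G → Z → Z) (ν : Measure Z)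
    [SFinite ν] (r : ℝ) : Prop :=
  ∀ (Y : Type) [MeasurableSpace Y] (κ : Measure Y) [IsProbabilityMeasure κ]
    (aY : G → Y → Y),
    (∀ g : G, Measurable (aY g)) → aY 1 = id →
    (∀ g h : G, aY (g * h) = aY g ∘ aY h) →
    (∀ g : G, κ.map (aY g) = κ) →
    InRatioSet (fun g (p : Z × Y) => (act g p.1, aY g p.2)) (ν.prod κ) r

/-- The operator `W_{n,m}`. -/
noncomputable def Wop {Z : Type*} [MeasurableSpace Z] (ν : Measure Z)
    (Υ : ℕ → G → Z → Z → ℝ) (Ω : ℕ → ℕ → Set Z) (n m : ℕ)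
    (f : Z → ℝ → ℝ) (b : Z) (t : ℝ) : ℝ :=
  ∑' g : G, ∫ b', Set.indicator (Ω n m) (fun _ => (1 : ℝ)) b * Υ n g b b' * f b' t ∂ν

/-- The operator `X_{n,m}`. -/
noncomputable def Xop {Z : Type*} [MeasurableSpace Z] (act : G → Z → Z) (ν : Measure Z)
    (Υ : ℕ → G → Z → Z → ℝ) (Ω : ℕ → ℕ → Set Z) (n m : ℕ)
    (f : Z → ℝ → ℝ) (b : Z) (t : ℝ) : ℝ :=
  ∑' g : G, ∫ b', Set.indicator (Ω n m) (fun _ => (1 : ℝ)) b * Υ n g b b' *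
      f (act g⁻¹ b') (t + Rlog act ν g⁻¹ b') ∂ν

/-- The operator `Y_{n,m}`. -/
noncomputable def Yop {Z : Type*} [MeasurableSpace Z] (act : G → Z → Z) (ν : Measure Z)
    (Υ : ℕ → G → Z → Z → ℝ) (Ω : ℕ → ℕ → Set Z) (n m : ℕ)
    (f : Z → ℝ → ℝ) (b : Z) (t : ℝ) : ℝ :=
  ∑' g : G, ∫ b', Set.indicator (Ω n m) (fun _ => (1 : ℝ)) b * Υ n g b b' *
      f (act g⁻¹ b) (t + Rlog act ν g⁻¹ b') ∂ν

/-- The operator `L_{n,m}`. -/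
noncomputable def Lop {Z : Type*} [MeasurableSpace Z] (act : G → Z → Z) (ν : Measure Z)
    (Υ : ℕ → G → Z → Z → ℝ) (Ω : ℕ → ℕ → Set Z) (n m : ℕ)
    (f : Z → ℝ → ℝ) (b : Z) (t : ℝ) : ℝ :=
  ∑' g : G, ∫ b', Set.indicator (Ω n m) (fun _ => (1 : ℝ)) b * Υ n g b b' *
      f b (t + Rlog act ν g⁻¹ b' - Rlog act ν g⁻¹ b) ∂ν

/-!
The mass of `ζ_{n,m}` is `ν(Ω(n,m)) > 1 - D(m)`, by the normalisation of `Υ_n`, and for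
`n > N(m)` the bounds on `R` put all of it into the closed set `1/C(m) ≤ |t| ≤ C(m)`. Both
properties pass to weak-* limits: the mass by testing against the constant `1`, the
concentration by testing against a continuous `[0,1]`-valued function whose zero set is that
closed set. The limit is thus a nonzero finite measure on `ℝ`, so its support is nonempty, and
it lies in the closed set.
-/

open Topology
open scoped BoundedContinuousFunction

section WeakLimit

variable {α ι : Type*} [TopologicalSpace α] [MeasurableSpace α] {L : Filter ι} [L.NeBot]
  {μs : ι → Measure α} {μ : Measure α}

lemma le_measureReal_univ_of_tendsto_integral
    (hlim : ∀ f : α →ᵇ ℝ, Tendsto (fun i => ∫ x, f x ∂μs i) L (𝓝 (∫ x, f x ∂μ)))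
    {c : ℝ} (hc : ∀ᶠ i in L, c ≤ (μs i).real univ) : c ≤ μ.real univ := by
  have h := hlim (BoundedContinuousFunction.const α 1)
  simp only [BoundedContinuousFunction.const_apply, integral_const, smul_eq_mul, mul_one] at h
  exact ge_of_tendsto h hc

lemma measure_compl_eq_zero_of_tendsto_integral [PerfectlyNormalSpace α]
    [OpensMeasurableSpace α] [IsFiniteMeasure μ]
    (hlim : ∀ f : α →ᵇ ℝ, Tendsto (fun i => ∫ x, f x ∂μs i) L (𝓝 (∫ x, f x ∂μ)))
    {K : Set α} (hK : IsClosed K) (hμs : ∀ᶠ i in L, μs i Kᶜ = 0) : μ Kᶜ = 0 := by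
  obtain ⟨f, rfl, hf01⟩ := perfectlyNormalSpace_iff_forall_isClosed_preimage_zero.1 ‹_› K hK
  let h : α →ᵇ ℝ := .mkOfBound f 1 fun x y => Real.dist_le_of_mem_Icc_01 (hf01 x) (hf01 y)
  have h_integral : ∫ x, h x ∂μ = 0 :=
    tendsto_nhds_unique (hlim h) <| tendsto_const_nhds.congr' <| hμs.mono fun i hi =>
      (integral_eq_zero_of_ae (ae_iff.2 hi)).symm
  exact ae_iff.1 <| (integral_eq_zero_iff_of_nonneg (fun x => (hf01 x).1) (h.integrable μ)).1
    h_integral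

end WeakLimit

@[fun_prop]
lemma measurable_Rlog {G X : Type*} [Group G] [MeasurableSpace X] (act : G → X → X)
    (ν : Measure X) (g : G) : Measurable (Rlog act ν g) :=
  Real.measurable_log.comp (Measure.measurable_rnDeriv _ _).ennreal_toReal

def absIcc (a b : ℝ) : Set ℝ := {t | a ≤ |t| ∧ |t| ≤ b}

lemma isClosed_absIcc (a b : ℝ) : IsClosed (absIcc a b) :=
  (isClosed_le continuous_const continuous_abs).inter (isClosed_le continuous_abs continuous_const)

lemma memSupport_iff {μ : Measure ℝ} {T : ℝ} : MemSupport μ T ↔ T ∈ μ.support :=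
  Metric.nhds_basis_ball.mem_measureSupport.symm

section Zeta

variable {G X : Type*} [Group G] [MeasurableSpace X] (act : G → X → X) (ν : Measure X) [SFinite ν]
  (Υ : ℕ → G → X → X → ℝ) (Ω : ℕ → ℕ → Set X) (n m : ℕ)

lemma zeta_apply {s : Set ℝ} (hs : MeasurableSet s) :
    zeta act ν Υ Ω n m s = ∑' g : G,
      ∫⁻ p in (fun p : X × X => Rlog act ν g⁻¹ p.2 - Rlog act ν g⁻¹ p.1) ⁻¹' s,
        Set.indicator (Ω n m) (fun _ => (1 : ℝ≥0∞)) p.1 * ENNReal.ofReal (Υ n g p.1 p.2)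
        ∂ν.prod ν := by
  rw [zeta, Measure.sum_apply _ hs]
  refine tsum_congr fun g => ?_
  have hR : Measurable fun p : X × X => Rlog act ν g⁻¹ p.2 - Rlog act ν g⁻¹ p.1 := by fun_prop
  rw [Measure.map_apply hR hs, withDensity_apply _ (hR hs)]

lemma zeta_univ [Countable G] (hΩ : MeasurableSet (Ω n m))
    (hΥ : ∀ g : G, Measurable (Function.uncurry (Υ n g)))
    (hnorm : ∀ b : X, ∑' g : G, ∫⁻ b', ENNReal.ofReal (Υ n g b b') ∂ν = 1) :
    zeta act ν Υ Ω n m univ = ν (Ω n m) := by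
  have hΥ' : ∀ g : G, Measurable fun p : X × X => ENNReal.ofReal (Υ n g p.1 p.2) :=
    fun g => ENNReal.measurable_ofReal.comp (hΥ g)
  calc zeta act ν Υ Ω n m univ
      = ∑' g : G, ∫⁻ b in Ω n m, ∫⁻ b', ENNReal.ofReal (Υ n g b b') ∂ν ∂ν := by
        rw [zeta_apply act ν Υ Ω n m MeasurableSet.univ]
        refine tsum_congr fun g => ?_
        rw [preimage_univ, Measure.restrict_univ, lintegral_prod _ (by fun_prop),
          ← lintegral_indicator hΩ]
        congr with b
        by_cases hb : b ∈ Ω n m <;> simp [hb]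
    _ = ∫⁻ _ in Ω n m, 1 ∂ν := by
        rw [← lintegral_tsum fun g => (hΥ' g).lintegral_prod_right'.aemeasurable]
        simp_rw [hnorm]
    _ = ν (Ω n m) := setLIntegral_one _

lemma zeta_compl_eq_zero {c : ℝ}
    (hR : ∀ g : G, ∀ᵐ p ∂(ν.prod ν), p.1 ∈ Ω n m → 0 < Υ n g p.1 p.2 →
      (|Rlog act ν g⁻¹ p.1| + |Rlog act ν g⁻¹ p.2| < c ∧
        1 / c ≤ |Rlog act ν g⁻¹ p.1 - Rlog act ν g⁻¹ p.2|)) :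
    zeta act ν Υ Ω n m (absIcc (1 / c) c)ᶜ = 0 := by
  have hK : MeasurableSet (absIcc (1 / c) c) := (isClosed_absIcc _ _).measurableSet
  rw [zeta_apply act ν Υ Ω n m hK.compl]
  refine ENNReal.tsum_eq_zero.2 fun g => (lintegral_congr_ae ?_).trans lintegral_zero
  have hpre : MeasurableSet ((fun p : X × X => Rlog act ν g⁻¹ p.2 - Rlog act ν g⁻¹ p.1) ⁻¹'
      (absIcc (1 / c) c)ᶜ) := by
    have : Measurable fun p : X × X => Rlog act ν g⁻¹ p.2 - Rlog act ν g⁻¹ p.1 := by fun_prop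
    exact this hK.compl
  filter_upwards [ae_restrict_of_ae (hR g), ae_restrict_mem hpre] with p hp hpK
  by_cases hpΩ : p.1 ∈ Ω n m
  · by_cases hpΥ : 0 < Υ n g p.1 p.2
    · obtain ⟨hsum, hdiff⟩ := hp hpΩ hpΥ
      refine absurd ⟨?_, ?_⟩ hpK
      · rwa [abs_sub_comm]
      · linarith [abs_sub (Rlog act ν g⁻¹ p.2) (Rlog act ν g⁻¹ p.1)]
    · simp [ENNReal.ofReal_eq_zero.2 (not_lt.1 hpΥ)]
  · simp [hpΩ]

end Zeta

theorem stmt15_general {G X : Type*} [Group G] [Countable G]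
    [MetricSpace X] [MeasurableSpace X] [BorelSpace X]
    (act : G → X → X)
    (ν : Measure X) [IsProbabilityMeasure ν]
    (Υ : ℕ → G → X → X → ℝ) (Ω : ℕ → ℕ → Set X)
    (D C : ℕ → ℝ) (N : ℕ → ℕ) (fbd : ℕ → ℕ → ℝ)
    (hadm : IsRelAdmissible act (fun a b : X => dist a b) ν Υ Ω D C N fbd)
    (hD1 : ∀ m : ℕ, D m < 1) :
    ∀ m : ℕ, ∀ ζm : Measure ℝ, WeakStarLimitPoint (fun n => zeta act ν Υ Ω n m) ζm →
      ENNReal.ofReal (1 - D m) ≤ ζm Set.univ ∧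
      ζm ({t : ℝ | 1 / C m ≤ |t| ∧ |t| ≤ C m}ᶜ) = 0 ∧
      (∃ T : ℝ, MemSupport ζm T) ∧
      (∀ T : ℝ, MemSupport ζm T → 1 / C m ≤ |T| ∧ |T| ≤ C m) := by
  intro m ζm ⟨φ, hφ, hlim⟩
  have hΩ : ∀ n, MeasurableSet (Ω n m) := fun n => (hadm.closed_Ω n m).measurableSet
  have hmass : 1 - D m ≤ ζm.real univ := by
    refine le_measureReal_univ_of_tendsto_integral hlim (.of_forall fun k => ?_)
    rw [measureReal_def, zeta_univ act ν Υ Ω _ m (hΩ _) (hadm.meas_Υ _) (hadm.normalized _)]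
    exact (ENNReal.ofReal_le_iff_le_toReal (measure_ne_top ν _)).1 (hadm.Ω_big _ m).le
  have hpos : 0 < ζm.real univ := (sub_pos.2 (hD1 m)).trans_le hmass
  have : IsFiniteMeasure ζm := ⟨(ENNReal.toReal_pos_iff.1 hpos).2⟩
  have hK := isClosed_absIcc (1 / C m) (C m)
  have hnull : ζm (absIcc (1 / C m) (C m))ᶜ = 0 := by
    refine measure_compl_eq_zero_of_tendsto_integral hlim hK
      (eventually_atTop.2 ⟨N m + 1, fun k hk => ?_⟩)
    exact zeta_compl_eq_zero act ν Υ Ω _ m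
      (hadm.R_bound m _ (Nat.lt_of_succ_le (hk.trans (hφ.id_le k))))
  refine ⟨ENNReal.ofReal_le_of_le_toReal hmass, hnull, ?_, fun T hT => ?_⟩
  · obtain ⟨T, hT⟩ := Measure.nonempty_support (μ := ζm) fun h => by simp [h] at hpos
    exact ⟨T, memSupport_iff.2 hT⟩
  · exact Measure.support_subset_of_isClosed hK (mem_ae_iff.2 hnull) (memSupport_iff.1 hT)

theorem stmt15 {G X : Type*} [Group G] [Countable G]
    [MetricSpace X] [CompactSpace X] [MeasurableSpace X] [BorelSpace X]
    (act : G → X → X) (hact_one : act 1 = id)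
    (hact_mul : ∀ g h : G, act (g * h) = act g ∘ act h)
    (hact_meas : ∀ g : G, Measurable (act g))
    (ν : Measure X) [IsProbabilityMeasure ν]
    (hqi : ∀ g : G, ν.map (act g) ≪ ν ∧ ν ≪ ν.map (act g))
    (Υ : ℕ → G → X → X → ℝ) (Ω : ℕ → ℕ → Set X)
    (D C : ℕ → ℝ) (N : ℕ → ℕ) (fbd : ℕ → ℕ → ℝ)
    (hadm : IsRelAdmissible act (fun a b : X => dist a b) ν Υ Ω D C N fbd)
    (hD1 : ∀ m : ℕ, D m < 1) :
    ∀ m : ℕ, ∀ ζm : Measure ℝ, WeakStarLimitPoint (fun n => zeta act ν Υ Ω n m) ζm →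
      ENNReal.ofReal (1 - D m) ≤ ζm Set.univ ∧
      ζm ({t : ℝ | 1 / C m ≤ |t| ∧ |t| ≤ C m}ᶜ) = 0 ∧
      (∃ T : ℝ, MemSupport ζm T) ∧
      (∀ T : ℝ, MemSupport ζm T → 1 / C m ≤ |T| ∧ |T| ≤ C m) :=
  stmt15_general act ν Υ Ω D C N fbd hadm hD1
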